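/- arXiv:2410.17441 — 5 statements merged into one kernel-verified Lean document; each statement's English description precedes it below -/
import Mathlib

section
/- The discrete LIF operator with subtraction reset satisfies the Alexiewicz accuracy bound: for every input f ∈ ℝ^{N+1}, leakage β ∈ (0,1], and threshold θ > 0, the residual z_n - s_n satisfies |z_n - s_n| < θ for all n, where z and s are defined by the LIF recursion; equivalently ‖f - s‖_{A,β} < θ. -/
/-!
The β-weighted partial sums `S n = ∑_{k ≤ n} β^(n-k) (f k - s k)` satisfy
`S (n+1) = β S n + (f (n+1) - s (n+1))`, which is the LIF recursion for `z - s`; hence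
`S n = z n - s n`. Truncation toward zero leaves a residual of absolute value
`θ · fract (|z| / θ) < θ`, so every weighted partial sum is below `θ`.
-/

/-- Truncation quantization toward zero to multiples of `θ`. -/
noncomputable def q (θ z : ℝ) : ℝ := Real.sign z * (θ * (⌊|z| / θ⌋ : ℤ))

/-- Discrete weighted Alexiewicz norm on `ℝ^{N+1}`. -/
noncomputable def anorm (β : ℝ) (N : ℕ) (f : ℕ → ℝ) : ℝ :=
  Finset.sup' (Finset.range (N + 1)) (by simp)
    (fun n => |∑ k ∈ Finset.range (n + 1), β ^ (n - k) * f k|)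

/-- Membrane potential of the discrete LIF recursion with subtraction reset;
the spike output at step `n` is `q θ (lifZ θ β f n)`. -/
noncomputable def lifZ (θ β : ℝ) (f : ℕ → ℝ) : ℕ → ℝ
  | 0 => f 0
  | k + 1 => f (k + 1) + β * (lifZ θ β f k - q θ (lifZ θ β f k))

theorem abs_sub_q_eq_mul_fract {θ : ℝ} (hθ : 0 < θ) (z : ℝ) :
    |z - q θ z| = θ * Int.fract (|z| / θ) := by
  have hfract : θ * Int.fract (|z| / θ) = |z| - θ * ⌊|z| / θ⌋ := by
    rw [Int.fract, mul_sub, mul_div_cancel₀ _ hθ.ne']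
  have hnonneg : 0 ≤ θ * Int.fract (|z| / θ) := mul_nonneg hθ.le (Int.fract_nonneg _)
  rw [hfract] at hnonneg ⊢
  rcases lt_trichotomy z 0 with hz | rfl | hz
  · rw [q, Real.sign_of_neg hz, abs_of_neg hz] at *
    rw [← abs_neg, abs_of_nonneg (by linarith)]
    ring
  · simp [q]
  · rw [q, Real.sign_of_pos hz, abs_of_pos hz] at *
    rw [abs_of_nonneg (by linarith)]
    ring

theorem abs_sub_q_lt {θ : ℝ} (hθ : 0 < θ) (z : ℝ) : |z - q θ z| < θ := by
  rw [abs_sub_q_eq_mul_fract hθ]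
  exact mul_lt_of_lt_one_right hθ (Int.fract_lt_one _)

theorem sum_range_succ_pow_sub_mul {R : Type*} [CommSemiring R] (β : R) (g : ℕ → R) (n : ℕ) :
    ∑ k ∈ Finset.range (n + 2), β ^ (n + 1 - k) * g k
      = β * ∑ k ∈ Finset.range (n + 1), β ^ (n - k) * g k + g (n + 1) := by
  rw [Finset.sum_range_succ, Nat.sub_self, pow_zero, one_mul, Finset.mul_sum]
  congr 1
  refine Finset.sum_congr rfl fun k hk => ?_
  rw [Nat.sub_add_comm (Finset.mem_range_succ_iff.mp hk), pow_succ]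
  ring

theorem sum_pow_mul_sub_q_lifZ (θ β : ℝ) (f : ℕ → ℝ) (n : ℕ) :
    ∑ k ∈ Finset.range (n + 1), β ^ (n - k) * (f k - q θ (lifZ θ β f k))
      = lifZ θ β f n - q θ (lifZ θ β f n) := by
  induction n with
  | zero => simp [lifZ]
  | succ n ih =>
    rw [sum_range_succ_pow_sub_mul, ih, lifZ]
    ring

theorem lif_alexiewicz_accuracy_general (θ β : ℝ) (hθ : 0 < θ)
    (N : ℕ) (f : ℕ → ℝ) :
    (∀ n, |lifZ θ β f n - q θ (lifZ θ β f n)| < θ) ∧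
    anorm β N (fun k => f k - q θ (lifZ θ β f k)) < θ := by
  refine ⟨fun n => abs_sub_q_lt hθ _, ?_⟩
  rw [anorm, Finset.sup'_lt_iff]
  intro n _
  rw [sum_pow_mul_sub_q_lifZ]
  exact abs_sub_q_lt hθ _

theorem lif_alexiewicz_accuracy (θ β : ℝ) (hθ : 0 < θ) (hβ : β ∈ Set.Ioc (0 : ℝ) 1)
    (N : ℕ) (f : ℕ → ℝ) :
    (∀ n, |lifZ θ β f n - q θ (lifZ θ β f n)| < θ) ∧
    anorm β N (fun k => f k - q θ (lifZ θ β f k)) < θ :=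
  lif_alexiewicz_accuracy_general θ β hθ N f
end

section
/- Sparsity upper bound for discrete LIF: for every f ∈ ℝ^{N+1}, β ∈ (0,1], and θ > 0, the output spike train s = LIF_{β,θ}(f) satisfies ∑_k |s_k| ≤ ∑_k |f_k|, i.e., ‖LIF_{β,θ}(f)‖_1 ≤ ‖f‖_1. -/
/-!
Each spike `s_k = q_θ(z_k)` has the sign of `z_k` and at most its size, so firing removes
exactly `|s_k|` from `|z_k|`; leakage `β ≤ 1` only shrinks what is left, and the next input
adds at most `|f_{k+1}|`. Hence the total spike mass emitted before step `n`, plus the current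
potential `|z_n|`, never exceeds the input mass received up to step `n`.
-/

lemma abs_sub_sign_mul {z m : ℝ} (hm : 0 ≤ m) (hmz : m ≤ |z|) :
    |z - Real.sign z * m| = |z| - m := by
  rcases lt_trichotomy z 0 with hz | rfl | hz
  · rw [abs_of_neg hz] at hmz ⊢
    rw [Real.sign_of_neg hz, neg_one_mul, sub_neg_eq_add, abs_of_nonpos (by linarith)]
    ring
  · simp [le_antisymm (by simpa using hmz) hm]
  · rw [abs_of_pos hz] at hmz ⊢
    rw [Real.sign_of_pos hz, one_mul, abs_of_nonneg (by linarith)]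

section Quantizer

variable {θ : ℝ} (hθ : 0 ≤ θ) (z : ℝ)
include hθ

lemma mul_floor_abs_div_nonneg : 0 ≤ θ * (⌊|z| / θ⌋ : ℤ) :=
  mul_nonneg hθ (Int.cast_nonneg (Int.floor_nonneg.2 (div_nonneg (abs_nonneg z) hθ)))

lemma mul_floor_abs_div_le_abs : θ * (⌊|z| / θ⌋ : ℤ) ≤ |z| := by
  rcases hθ.eq_or_lt with rfl | hθ'
  · simp
  · calc θ * (⌊|z| / θ⌋ : ℤ) ≤ θ * (|z| / θ) := mul_le_mul_of_nonneg_left (Int.floor_le _) hθ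
      _ = |z| := mul_div_cancel₀ _ hθ'.ne'

lemma abs_q : |q θ z| = θ * (⌊|z| / θ⌋ : ℤ) := by
  rcases eq_or_ne z 0 with rfl | hz
  · simp [q]
  · rcases Real.sign_apply_eq_of_ne_zero z hz with h | h <;>
      simp [q, h, abs_of_nonneg (mul_floor_abs_div_nonneg hθ z)]

lemma abs_q_le : |q θ z| ≤ |z| :=
  abs_q hθ z ▸ mul_floor_abs_div_le_abs hθ z

lemma abs_sub_q : |z - q θ z| = |z| - |q θ z| := by
  rw [abs_q hθ, q, abs_sub_sign_mul (mul_floor_abs_div_nonneg hθ z) (mul_floor_abs_div_le_abs hθ z)]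

end Quantizer

section LIF

variable {θ β : ℝ} (hθ : 0 ≤ θ) (hβ : β ∈ Set.Icc (0 : ℝ) 1) (f : ℕ → ℝ)
include hθ hβ

lemma abs_lifZ_succ_le (k : ℕ) :
    |lifZ θ β f (k + 1)| ≤ |f (k + 1)| + (|lifZ θ β f k| - |q θ (lifZ θ β f k)|) := by
  have hres : 0 ≤ |lifZ θ β f k| - |q θ (lifZ θ β f k)| := sub_nonneg.2 (abs_q_le hθ _)
  calc |lifZ θ β f (k + 1)|
      ≤ |f (k + 1)| + |β * (lifZ θ β f k - q θ (lifZ θ β f k))| := abs_add_le _ _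
    _ = |f (k + 1)| + β * (|lifZ θ β f k| - |q θ (lifZ θ β f k)|) := by
        rw [abs_mul, abs_of_nonneg hβ.1, abs_sub_q hθ]
    _ ≤ |f (k + 1)| + (|lifZ θ β f k| - |q θ (lifZ θ β f k)|) := by
        gcongr
        exact mul_le_of_le_one_left hres hβ.2

lemma sum_abs_q_lifZ_add_abs_lifZ_le (n : ℕ) :
    ∑ k ∈ Finset.range n, |q θ (lifZ θ β f k)| + |lifZ θ β f n| ≤
      ∑ k ∈ Finset.range (n + 1), |f k| := by
  induction n with
  | zero => simp [lifZ]
  | succ n ih =>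
    rw [Finset.sum_range_succ, Finset.sum_range_succ (fun k => |f k|)]
    linarith [abs_lifZ_succ_le hθ hβ f n]

end LIF

theorem lif_sparsity_upper_bound (θ β : ℝ) (hθ : 0 < θ) (hβ : β ∈ Set.Ioc (0 : ℝ) 1)
    (N : ℕ) (f : ℕ → ℝ) :
    ∑ k ∈ Finset.range (N + 1), |q θ (lifZ θ β f k)| ≤
      ∑ k ∈ Finset.range (N + 1), |f k| := by
  have hβ' : β ∈ Set.Icc (0 : ℝ) 1 := Set.Ioc_subset_Icc_self hβ
  rw [Finset.sum_range_succ]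
  linarith [abs_q_le hθ.le (lifZ θ β f N), sum_abs_q_lifZ_add_abs_lifZ_le hθ.le hβ' f N]
end

section
/- LIF is idempotent: for every f ∈ ℝ^{N+1}, β ∈ (0,1], θ > 0, applying the discrete LIF operator twice gives the same result as applying it once: LIF_{β,θ}(LIF_{β,θ}(f)) = LIF_{β,θ}(f). -/
lemma q_int (θ : ℝ) (hθ : 0 < θ) (m : ℤ) : q θ (θ * m) = θ * m := by
  rcases lt_trichotomy (m : ℝ) 0 with h | h | h
  · have hz : θ * m < 0 := mul_neg_of_pos_of_neg hθ h
    have hm : (m : ℝ) ≤ 0 := le_of_lt h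
    rw [q, Real.sign_of_neg hz, abs_of_neg hz]
    have : -(θ * m) / θ = (-m : ℤ) := by
      push_cast; field_simp
    rw [this, Int.floor_intCast]
    push_cast; ring
  · rw [h, mul_zero]; simp [q]
  · have hz : 0 < θ * m := mul_pos hθ h
    rw [q, Real.sign_of_pos hz, abs_of_pos hz]
    have : θ * m / θ = (m : ℝ) := by field_simp
    rw [this, Int.floor_intCast]
    ring

lemma q_idem (θ : ℝ) (hθ : 0 < θ) (z : ℝ) : q θ (q θ z) = q θ z := by
  rcases lt_trichotomy z 0 with h | h | h
  · have : q θ z = θ * ((-⌊|z| / θ⌋ : ℤ) : ℝ) := by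
      rw [q, Real.sign_of_neg h]; push_cast; ring
    rw [this, q_int θ hθ]
  · subst h; simp [q]
  · have : q θ z = θ * ((⌊|z| / θ⌋ : ℤ) : ℝ) := by
      rw [q, Real.sign_of_pos h]; ring
    rw [this, q_int θ hθ]

theorem lif_idempotent (θ β : ℝ) (hθ : 0 < θ) (hβ : β ∈ Set.Ioc (0 : ℝ) 1)
    (f : ℕ → ℝ) :
    (fun k => q θ (lifZ θ β (fun j => q θ (lifZ θ β f j)) k)) =
      (fun k => q θ (lifZ θ β f k)) := by
  set g : ℕ → ℝ := fun j => q θ (lifZ θ β f j) with hg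
  have key : ∀ k, lifZ θ β g k = g k := by
    intro k
    induction k with
    | zero => rfl
    | succ n ih =>
        rw [lifZ, ih]
        have : q θ (g n) = g n := q_idem θ hθ _
        rw [this]; ring
  funext k
  rw [key k, q_idem θ hθ]
end

section
/- If two spike trains s and s* with entries in θℤ both lie in the open Alexiewicz ball of radius θ around the same f, then their unweighted Alexiewicz distance satisfies ‖s - s*‖_A ∈ {0, θ}, where ‖g‖_A = max_n |∑_{k=0}^n g_k|. -/
section Alexiewicz

variable (β : ℝ) (N : ℕ)

theorem abs_sum_le_anorm (g : ℕ → ℝ) {n : ℕ} (hn : n ≤ N) :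
    |∑ k ∈ Finset.range (n + 1), β ^ (n - k) * g k| ≤ anorm β N g :=
  Finset.le_sup' (fun n => |∑ k ∈ Finset.range (n + 1), β ^ (n - k) * g k|)
    (Finset.mem_range_succ_iff.mpr hn)

theorem exists_anorm_eq_abs_sum (g : ℕ → ℝ) :
    ∃ n ≤ N, anorm β N g = |∑ k ∈ Finset.range (n + 1), β ^ (n - k) * g k| := by
  obtain ⟨n, hn, hmax⟩ := Finset.exists_mem_eq_sup' Finset.nonempty_range_add_one
    (fun n => |∑ k ∈ Finset.range (n + 1), β ^ (n - k) * g k|)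
  exact ⟨n, Finset.mem_range_succ_iff.mp hn, hmax⟩

theorem anorm_sub_le (g h : ℕ → ℝ) :
    anorm β N (fun k => g k - h k) ≤ anorm β N g + anorm β N h := by
  refine Finset.sup'_le _ _ fun n hn => ?_
  have hn := Finset.mem_range_succ_iff.mp hn
  simp only [mul_sub, Finset.sum_sub_distrib]
  exact (abs_sub _ _).trans (add_le_add (abs_sum_le_anorm β N g hn) (abs_sum_le_anorm β N h hn))

end Alexiewicz

theorem exists_sum_range_eq_mul_intCast {θ : ℝ} {n : ℕ} {s : ℕ → ℝ}
    (hs : ∀ k < n, ∃ m : ℤ, s k = θ * m) : ∃ M : ℤ, ∑ k ∈ Finset.range n, s k = θ * M := by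
  choose! m hm using hs
  refine ⟨∑ k ∈ Finset.range n, m k, ?_⟩
  rw [Finset.sum_congr rfl fun k hk => hm k (Finset.mem_range.mp hk), ← Finset.mul_sum]
  push_cast
  rfl

theorem abs_mul_intCast_eq_zero_or_eq_of_lt {θ : ℝ} {M : ℤ} (h : |θ * M| < 2 * θ) :
    |θ * M| = 0 ∨ |θ * M| = θ := by
  have hθ : 0 < θ := by linarith [abs_nonneg (θ * M)]
  rw [abs_mul, abs_of_pos hθ] at h ⊢
  have hM : |(M : ℝ)| < 2 := lt_of_mul_lt_mul_left (by linarith) hθ.le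
  obtain ⟨hl, hr⟩ := abs_lt.mp (show |M| < 2 by exact_mod_cast hM)
  interval_cases M <;> simp

theorem spike_train_distance_dichotomy_general (θ : ℝ) (N : ℕ)
    (f s s' : ℕ → ℝ)
    (hs : ∀ k ≤ N, ∃ m : ℤ, s k = θ * m) (hs' : ∀ k ≤ N, ∃ m : ℤ, s' k = θ * m)
    (h1 : anorm 1 N (fun k => f k - s k) < θ)
    (h2 : anorm 1 N (fun k => f k - s' k) < θ) :
    anorm 1 N (fun k => s k - s' k) = 0 ∨ anorm 1 N (fun k => s k - s' k) = θ := by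
  have hlt : anorm 1 N (fun k => s k - s' k) < 2 * θ := by
    have hsub := anorm_sub_le 1 N (fun k => f k - s' k) (fun k => f k - s k)
    simp only [sub_sub_sub_cancel_left] at hsub
    linarith
  obtain ⟨n, hn, hmax⟩ := exists_anorm_eq_abs_sum 1 N (fun k => s k - s' k)
  obtain ⟨M, hM⟩ : ∃ M : ℤ, ∑ k ∈ Finset.range (n + 1), (s k - s' k) = θ * M := by
    refine exists_sum_range_eq_mul_intCast fun k hk => ?_
    obtain ⟨m, hm⟩ := hs k (by omega)
    obtain ⟨m', hm'⟩ := hs' k (by omega)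
    exact ⟨m - m', by rw [hm, hm']; push_cast; ring⟩
  simp only [one_pow, one_mul, hM] at hmax
  rw [hmax] at hlt ⊢
  exact abs_mul_intCast_eq_zero_or_eq_of_lt hlt

theorem spike_train_distance_dichotomy (θ : ℝ) (hθ : 0 < θ) (N : ℕ)
    (f s s' : ℕ → ℝ)
    (hs : ∀ k ≤ N, ∃ m : ℤ, s k = θ * m) (hs' : ∀ k ≤ N, ∃ m : ℤ, s' k = θ * m)
    (h1 : anorm 1 N (fun k => f k - s k) < θ)
    (h2 : anorm 1 N (fun k => f k - s' k) < θ) :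
    anorm 1 N (fun k => s k - s' k) = 0 ∨ anorm 1 N (fun k => s k - s' k) = θ :=
  spike_train_distance_dichotomy_general θ N f s s' hs hs' h1 h2
end

section
/- One-step minimization lemma: for all a, b ∈ ℝ, θ > 0, β ∈ [0,1], setting x* := -sgn(a)·min{|a|, θ} and y* := -sgn(b - βx*)·min{|b - βx*|, θ}, the pair (x*, y*) minimizes (x,y) ↦ |a + x| + |b - βx + y| over [-θ, θ]². -/
lemma rsign_mul_abs (c : ℝ) : Real.sign c * |c| = c := by
  rcases lt_trichotomy c 0 with h | h | h
  · rw [Real.sign_of_neg h, abs_of_neg h]; ring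
  · simp [h]
  · rw [Real.sign_of_pos h, abs_of_pos h]; ring

lemma star_abs (θ : ℝ) (hθ : 0 ≤ θ) (c : ℝ) :
    |c + (-Real.sign c * min |c| θ)| = max (|c| - θ) 0 := by
  rcases le_or_gt |c| θ with h | h
  · rw [min_eq_left h, neg_mul, rsign_mul_abs]
    simp [max_eq_right (by linarith : |c| - θ ≤ 0)]
  · rw [min_eq_right h.le]
    have hc0 : c ≠ 0 := by
      intro h0; simp [h0, abs_nonneg] at h; linarith
    rcases lt_or_gt_of_ne hc0 with hneg | hpos
    · rw [Real.sign_of_neg hneg]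
      rw [abs_of_neg hneg] at h ⊢
      rw [abs_of_nonpos (by linarith), max_eq_left (by linarith)]
      ring
    · rw [Real.sign_of_pos hpos]
      rw [abs_of_pos hpos] at h ⊢
      rw [abs_of_nonneg (by linarith), max_eq_left (by linarith)]
      ring

lemma star_lb (θ : ℝ) (c z : ℝ) (hz : |z| ≤ θ) : max (|c| - θ) 0 ≤ |c + z| := by
  have h1 : |c| ≤ |c + z| + |z| := by
    calc |c| = |(c + z) + (-z)| := by ring_nf
    _ ≤ |c + z| + |(-z)| := abs_add_le _ _
    _ = |c + z| + |z| := by rw [abs_neg]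
  exact max_le (by linarith) (abs_nonneg _)

lemma key_ineq (a θ β x : ℝ) (hθ : 0 < θ) (hβ0 : 0 ≤ β) (hβ1 : β ≤ 1)
    (hx1 : -θ ≤ x) (hx2 : x ≤ θ) :
    max (|a| - θ) 0 + β * |x - (-Real.sign a * min |a| θ)| ≤ |a + x| := by
  rcases le_or_gt |a| θ with h | h
  · rw [min_eq_left h, neg_mul, rsign_mul_abs,
      max_eq_right (by linarith : |a| - θ ≤ 0)]
    have : |x - -a| = |a + x| := by rw [show x - -a = a + x by ring]
    rw [this]
    nlinarith [abs_nonneg (a + x)]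
  · rw [min_eq_right h.le, max_eq_left (by linarith)]
    have ha0 : a ≠ 0 := by intro h0; simp [h0] at h; linarith
    rcases lt_or_gt_of_ne ha0 with hneg | hpos
    · rw [Real.sign_of_neg hneg]
      rw [abs_of_neg hneg] at h ⊢
      have hax : a + x < 0 := by linarith
      rw [abs_of_neg hax, abs_of_nonpos (by linarith : x - -(-1) * θ ≤ 0)]
      nlinarith
    · rw [Real.sign_of_pos hpos]
      rw [abs_of_pos hpos] at h ⊢
      have hax : 0 < a + x := by linarith
      rw [abs_of_pos hax, abs_of_nonneg (by linarith : 0 ≤ x - -1 * θ)]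
      nlinarith

theorem one_step_l1_minimization (a b θ β : ℝ) (hθ : 0 < θ) (hβ : β ∈ Set.Icc (0 : ℝ) 1) :
    ∀ x ∈ Set.Icc (-θ) θ, ∀ y ∈ Set.Icc (-θ) θ,
      |a + (-Real.sign a * min |a| θ)| +
        |b - β * (-Real.sign a * min |a| θ) +
          (-Real.sign (b - β * (-Real.sign a * min |a| θ)) *
            min |b - β * (-Real.sign a * min |a| θ)| θ)| ≤
      |a + x| + |b - β * x + y| := by
  obtain ⟨hβ0, hβ1⟩ := hβ
  intro x hx y hy
  obtain ⟨hx1, hx2⟩ := hx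
  obtain ⟨hy1, hy2⟩ := hy
  set xs := -Real.sign a * min |a| θ with hxs
  set c := b - β * xs with hc
  rw [star_abs θ hθ.le a, star_abs θ hθ.le c]
  -- lower bound second actual term
  have h2 : max (|b - β * x| - θ) 0 ≤ |b - β * x + y| :=
    star_lb θ _ y (abs_le.mpr ⟨hy1, hy2⟩)
  -- Lipschitz: |c| ≤ |b - β*x| + β * |x - xs|
  have hlip : |c| ≤ |b - β * x| + β * |x - xs| := by
    have : c = (b - β * x) + β * (x - xs) := by rw [hc]; ring
    calc |c| ≤ |b - β * x| + |β * (x - xs)| := this ▸ abs_add_le _ _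
    _ = |b - β * x| + β * |x - xs| := by
        rw [abs_mul, abs_of_nonneg hβ0]
  have hmax : max (|c| - θ) 0 ≤ max (|b - β * x| - θ) 0 + β * |x - xs| := by
    have hd : 0 ≤ β * |x - xs| := mul_nonneg hβ0 (abs_nonneg _)
    rcases le_or_gt (|c| - θ) 0 with h | h
    · rw [max_eq_right h]; positivity
    · rw [max_eq_left h.le]
      have := le_max_left (|b - β * x| - θ) 0
      linarith
  have hkey := key_ineq a θ β x hθ hβ0 hβ1 hx1 hx2
  linarith
end
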